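/- Let f : X → ℝ ∪ {+∞} be proper, quasiconvex and lower semicontinuous on a Banach space X, and assume that for each x ∈ X \ argmin f there exists λ < f(x) such that int S_λ ≠ ∅. Then there exists a norm-to-weak* upper semicontinuous set-valued map A : X \ argmin f ⇉ B* such that A(x) is a nonempty weak*-compact convex base of the normal cone N^a(x) for every x ∈ X \ argmin f; in particular 0 ∉ A(x) and N^a(x) = {t·a : t ≥ 0, a ∈ A(x)}. -/

import Mathlib

open Metric Classical Topology Filter
set_option linter.unusedSectionVars false
set_option linter.unusedVariables false
set_option maxHeartbeats 1000000

variable {X : Type*} [NormedAddCommGroup X] [NormedSpace ℝ X] [CompleteSpace X]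

def IsBase {D : Type*} [AddCommMonoid D] [Module ℝ D] [TopologicalSpace D]
    (K A : Set D) : Prop :=
  Convex ℝ A ∧ A ⊆ K ∧ K = {p | ∃ t : ℝ, 0 ≤ t ∧ ∃ a ∈ A, p = t • a} ∧
    (0 : D) ∉ closure A

/-- The adjusted sublevel set `S^a_f(x)`. -/
noncomputable def adjSublevel (f : X → EReal) (x : X) : Set X :=
  if ∀ z : X, f x ≤ f z then {y | f y ≤ f x}
  else {y | f y ≤ f x} ∩
    {y | infDist y {z | f z < f x} ≤ infDist x {z | f z < f x}}

/-- The normal cone operator to the adjusted sublevel sets. -/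
noncomputable def adjNormal (f : X → EReal) (x : X) : Set (WeakDual ℝ X) :=
  {p | ∀ y ∈ adjSublevel f x, p (y - x) ≤ 0}

section Aux
variable {f : X → EReal}

lemma qc_max (hfbot : ∀ y, f y ≠ ⊥) (hqc : ∀ l : ℝ, Convex ℝ {y | f y ≤ (l : EReal)})
    {u v : X} {a b : ℝ} (ha : 0 ≤ a) (hb : 0 ≤ b) (hab : a + b = 1) :
    f (a • u + b • v) ≤ max (f u) (f v) := by
  by_cases hm : max (f u) (f v) = ⊤
  · rw [hm]; exact le_top
  have hmb : max (f u) (f v) ≠ ⊥ := by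
    intro h
    exact hfbot u (le_bot_iff.mp (h ▸ le_max_left (f u) (f v)))
  have hcl : ((max (f u) (f v)).toReal : EReal) = max (f u) (f v) := EReal.coe_toReal hm hmb
  have hu : u ∈ {y | f y ≤ ((max (f u) (f v)).toReal : EReal)} := by
    rw [Set.mem_setOf_eq, hcl]; exact le_max_left _ _
  have hv : v ∈ {y | f y ≤ ((max (f u) (f v)).toReal : EReal)} := by
    rw [Set.mem_setOf_eq, hcl]; exact le_max_right _ _
  have := hqc _ hu hv ha hb hab
  rw [Set.mem_setOf_eq, hcl] at this
  exact this

lemma convex_slt (hfbot : ∀ y, f y ≠ ⊥) (hqc : ∀ l : ℝ, Convex ℝ {y | f y ≤ (l : EReal)})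
    (c : EReal) : Convex ℝ {z | f z < c} := by
  intro u hu v hv a b ha hb hab
  rw [Set.mem_setOf_eq] at hu hv ⊢
  exact lt_of_le_of_lt (qc_max hfbot hqc ha hb hab) (max_lt hu hv)

lemma convex_sle (hfbot : ∀ y, f y ≠ ⊥) (hqc : ∀ l : ℝ, Convex ℝ {y | f y ≤ (l : EReal)})
    (x : X) : Convex ℝ {z | f z ≤ f x} := by
  by_cases hx : f x = ⊤
  · have : {z | f z ≤ f x} = Set.univ := by
      ext z; simp [hx]
    rw [this]; exact convex_univ
  · have : ((f x).toReal : EReal) = f x := EReal.coe_toReal hx (hfbot x)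
    have h2 : {z | f z ≤ f x} = {z | f z ≤ ((f x).toReal : EReal)} := by
      ext z; rw [Set.mem_setOf_eq, Set.mem_setOf_eq, this]
    rw [h2]; exact hqc _

lemma convex_infDist_le {S : Set X} (hS : Convex ℝ S) (c : ℝ) :
    Convex ℝ {z | infDist z S ≤ c} := by
  rcases Set.eq_empty_or_nonempty S with rfl | hne
  · by_cases h0 : (0:ℝ) ≤ c
    · have : {z : X | infDist z (∅ : Set X) ≤ c} = Set.univ := by
        ext z; simp [Metric.infDist_empty, h0]
      rw [this]; exact convex_univ
    · have : {z : X | infDist z (∅ : Set X) ≤ c} = ∅ := by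
        ext z; simp [Metric.infDist_empty, h0]
      rw [this]; exact convex_empty
  intro u hu v hv a b ha hb hab
  rw [Set.mem_setOf_eq] at hu hv ⊢
  refine le_of_forall_pos_le_add (fun θ hθ => ?_)
  have hu2 : infDist u S < c + θ := lt_of_le_of_lt hu (by linarith)
  have hv2 : infDist v S < c + θ := lt_of_le_of_lt hv (by linarith)
  obtain ⟨u', hu'S, hu'd⟩ := (infDist_lt_iff hne).mp hu2
  obtain ⟨v', hv'S, hv'd⟩ := (infDist_lt_iff hne).mp hv2
  have hmem : a • u' + b • v' ∈ S := hS hu'S hv'S ha hb hab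
  have h1 : infDist (a • u + b • v) S ≤ dist (a • u + b • v) (a • u' + b • v') :=
    infDist_le_dist_of_mem hmem
  have h2 : dist (a • u + b • v) (a • u' + b • v') ≤ a * dist u u' + b * dist v v' := by
    rw [dist_eq_norm, dist_eq_norm, dist_eq_norm]
    have he : (a • u + b • v) - (a • u' + b • v') = a • (u - u') + b • (v - v') := by
      rw [smul_sub, smul_sub]; abel
    rw [he]
    refine (norm_add_le _ _).trans ?_
    rw [norm_smul, norm_smul, Real.norm_of_nonneg ha, Real.norm_of_nonneg hb]
  have h3 : a * dist u u' ≤ a * (c + θ) := mul_le_mul_of_nonneg_left hu'd.le ha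
  have h4 : b * dist v v' ≤ b * (c + θ) := mul_le_mul_of_nonneg_left hv'd.le hb
  have h5 : a * (c + θ) + b * (c + θ) = c + θ := by rw [← add_mul, hab, one_mul]
  linarith [h1, h2, h3, h4]

lemma strict_subset_adj {x z : X} (hz : f z < f x) : z ∈ adjSublevel f x := by
  unfold adjSublevel
  split_ifs with h
  · exact le_of_lt hz
  · refine ⟨le_of_lt hz, ?_⟩
    show infDist z {z | f z < f x} ≤ infDist x {z | f z < f x}
    rw [infDist_zero_of_mem (show z ∈ {z | f z < f x} from hz)]
    exact infDist_nonneg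

lemma self_mem_adj (x : X) : x ∈ adjSublevel f x := by
  unfold adjSublevel
  split_ifs with h
  · show f x ≤ f x; exact le_refl _
  · exact ⟨show f x ≤ f x from le_refl _,
      show infDist x {z | f z < f x} ≤ infDist x {z | f z < f x} from le_refl _⟩

lemma convex_adj (hfbot : ∀ y, f y ≠ ⊥) (hqc : ∀ l : ℝ, Convex ℝ {y | f y ≤ (l : EReal)})
    (x : X) : Convex ℝ (adjSublevel f x) := by
  unfold adjSublevel
  split_ifs with h
  · exact convex_sle hfbot hqc x
  · exact (convex_sle hfbot hqc x).inter
      (convex_infDist_le (convex_slt hfbot hqc (f x)) _)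

lemma adj_eq_of_not_argmin {x : X} (hx : ¬ ∀ z, f x ≤ f z) :
    adjSublevel f x = {y | f y ≤ f x} ∩
      {y | infDist y {z | f z < f x} ≤ infDist x {z | f z < f x}} := if_neg hx

lemma smul_mem_adjNormal {x : X} {p : WeakDual ℝ X} (hp : p ∈ adjNormal f x) {t : ℝ}
    (ht : 0 ≤ t) : t • p ∈ adjNormal f x := by
  intro y hy
  have : (t • p) (y - x) = t * p (y - x) := rfl
  rw [this]
  exact mul_nonpos_iff.mpr (Or.inl ⟨ht, hp y hy⟩)

lemma norm_le_of_adjNormal {x : X} {q : WeakDual ℝ X} (hq : q ∈ adjNormal f x)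
    {l : ℝ} {v : X} {ε : ℝ} (hε : 0 < ε) (hl : (l : EReal) < f x)
    (hball : ball v ε ⊆ {y | f y ≤ (l : EReal)}) :
    ε * ‖WeakDual.toStrongDual q‖ ≤ q (x - v) := by
  have key : ∀ u : X, ‖u‖ < ε → q u ≤ q (x - v) := by
    intro u hu
    have hmem : v + u ∈ ball v ε := by
      rw [mem_ball, dist_eq_norm, add_sub_cancel_left]; exact hu
    have hadj : v + u ∈ adjSublevel f x :=
      strict_subset_adj (lt_of_le_of_lt (hball hmem) hl)
    have h0 := hq _ hadj
    have e1 : q (v + u - x) = q v + q u - q x := by rw [map_sub, map_add]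
    have e2 : q (x - v) = q x - q v := map_sub q x v
    linarith [h0, e1 ▸ h0]
  have hM0 : 0 ≤ q (x - v) := by
    have := key 0 (by simpa using hε)
    simpa using this
  have hb : ∀ z : X, ε * q z ≤ q (x - v) * ‖z‖ := by
    intro z
    rcases eq_or_ne z 0 with rfl | hz
    · simp
    have hz0 : 0 < ‖z‖ := norm_pos_iff.mpr hz
    have step : ∀ s : ℝ, 0 < s → s < ε → s * q z ≤ q (x - v) * ‖z‖ := by
      intro s hs hsε
      have hu : ‖(s / ‖z‖) • z‖ < ε := by
        rw [norm_smul, Real.norm_eq_abs, abs_of_pos (div_pos hs hz0),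
          div_mul_cancel₀ _ hz0.ne']
        exact hsε
      have h1 := key _ hu
      have h2 : q ((s / ‖z‖) • z) = (s / ‖z‖) * q z := by
        rw [map_smul]; rfl
      rw [h2] at h1
      have h3 : ((s / ‖z‖) * q z) * ‖z‖ ≤ q (x - v) * ‖z‖ :=
        mul_le_mul_of_nonneg_right h1 hz0.le
      calc s * q z = ((s / ‖z‖) * q z) * ‖z‖ := by field_simp
      _ ≤ q (x - v) * ‖z‖ := h3
    rcases le_or_gt (q z) 0 with hqz | hqz
    · have : ε * q z ≤ 0 := mul_nonpos_iff.mpr (Or.inl ⟨hε.le, hqz⟩)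
      exact this.trans (mul_nonneg hM0 hz0.le)
    · by_contra hcon
      push_neg at hcon
      have hC0 : 0 ≤ q (x - v) * ‖z‖ / q z := div_nonneg (mul_nonneg hM0 hz0.le) hqz.le
      have hCq : q (x - v) * ‖z‖ / q z < ε := by
        rw [div_lt_iff₀ hqz]; nlinarith
      set s := (q (x - v) * ‖z‖ / q z + ε) / 2 with hs_def
      have hs_pos : 0 < s := by rw [hs_def]; linarith
      have hsε : s < ε := by rw [hs_def]; linarith
      have h6 := step s hs_pos hsε
      have h7 : q (x - v) * ‖z‖ / q z < s := by rw [hs_def]; linarith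
      rw [div_lt_iff₀ hqz] at h7
      linarith
  have hnorm : ‖WeakDual.toStrongDual q‖ ≤ q (x - v) / ε := by
    refine ContinuousLinearMap.opNorm_le_bound _ (div_nonneg hM0 hε.le) (fun z => ?_)
    have hz1 := hb z
    have hz2 := hb (-z)
    rw [map_neg] at hz2
    rw [norm_neg] at hz2
    rw [WeakDual.toStrongDual_apply, Real.norm_eq_abs, abs_le]
    constructor
    · have h8 : -q z ≤ q (x - v) * ‖z‖ / ε := (le_div_iff₀ hε).mpr (by linarith)
      have h9 : q (x - v) / ε * ‖z‖ = q (x - v) * ‖z‖ / ε := by ring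
      rw [h9]; linarith
    · have h8 : q z ≤ q (x - v) * ‖z‖ / ε := (le_div_iff₀ hε).mpr (by linarith)
      have h9 : q (x - v) / ε * ‖z‖ = q (x - v) * ‖z‖ / ε := by ring
      rw [h9]; linarith
  calc ε * ‖WeakDual.toStrongDual q‖ ≤ ε * (q (x - v) / ε) :=
        mul_le_mul_of_nonneg_left hnorm hε.le
  _ = q (x - v) := by field_simp

lemma not_mem_interior_adj (hfbot : ∀ y, f y ≠ ⊥)
    (hqc : ∀ l : ℝ, Convex ℝ {y | f y ≤ (l : EReal)})
    {x : X} (hx : ¬ ∀ z, f x ≤ f z)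
    {l : ℝ} {v : X} {ε : ℝ} (hε : 0 < ε) (hl : (l : EReal) < f x)
    (hball : ball v ε ⊆ {y | f y ≤ (l : EReal)}) :
    x ∉ interior (adjSublevel f x) := by
  intro hmem
  set S : Set X := {z | f z < f x} with hS_def
  have hSconv : Convex ℝ S := convex_slt hfbot hqc (f x)
  obtain ⟨z₀, hz₀⟩ : ∃ z, f z < f x := by
    push_neg at hx; exact hx
  have hSne : S.Nonempty := ⟨z₀, hz₀⟩
  set d := infDist x S with hd_def
  have hsub2 : adjSublevel f x ⊆ {z | infDist z S ≤ d} := by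
    rw [adj_eq_of_not_argmin hx]; exact fun z hz => hz.2
  have hballS : ball v ε ⊆ S := fun u hu => lt_of_le_of_lt (hball hu) hl
  have hvS : v ∈ interior S := mem_interior.mpr ⟨ball v ε, hballS, isOpen_ball, mem_ball_self hε⟩
  rcases le_or_gt d 0 with hd0 | hd0
  · -- d = 0 : x ∈ interior (closure S), derive x ∈ interior S, contradiction
    have hd0' : d = 0 := le_antisymm hd0 infDist_nonneg
    have hsub3 : adjSublevel f x ⊆ closure S := by
      intro z hz
      have h1 : infDist z S ≤ 0 := hd0' ▸ hsub2 hz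
      exact (mem_closure_iff_infDist_zero hSne).mpr (le_antisymm h1 infDist_nonneg)
    have hxint : x ∈ interior (closure S) := interior_mono hsub3 hmem
    obtain ⟨r, hr, hrball⟩ := Metric.mem_nhds_iff.mp (mem_interior_iff_mem_nhds.mp hxint)
    have h1t' : True := trivial
    by_cases hvx : v = x
    · rw [hvx] at hvS
      have : x ∈ S := interior_subset hvS
      exact (lt_irrefl (f x)) this
    have hxv : (0:ℝ) < ‖x - v‖ := by
      rw [norm_pos_iff, sub_ne_zero]; exact fun h => hvx h.symm
    set t := r / (2 * ‖x - v‖) with ht_def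
    have ht : 0 < t := by positivity
    set z := x + t • (x - v) with hz_def
    have hzcl : z ∈ closure S := by
      apply hrball
      rw [mem_ball, dist_eq_norm]
      have : z - x = t • (x - v) := by rw [hz_def]; abel
      rw [this, norm_smul, Real.norm_of_nonneg ht.le, ht_def]
      have he : r / (2 * ‖x - v‖) * ‖x - v‖ = r / 2 := by
        field_simp
      rw [he]; linarith
    have h1t : (0:ℝ) < 1 + t := by linarith
    have hxseg : x ∈ openSegment ℝ v z := by
      refine ⟨t / (1 + t), 1 / (1 + t), by positivity, by positivity, ?_, ?_⟩
      · rw [← add_div, add_comm, div_self h1t.ne']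
      rw [hz_def]
      match_scalars <;> field_simp <;> ring
    have := hSconv.openSegment_interior_closure_subset_interior hvS hzcl hxseg
    have h2 : x ∈ S := interior_subset this
    exact (lt_irrefl (f x)) h2
  · -- d > 0
    obtain ⟨r, hr, hrball⟩ := Metric.mem_nhds_iff.mp (mem_interior_iff_mem_nhds.mp hmem)
    have hvx : z₀ ≠ x := fun h => absurd (h ▸ hz₀) (lt_irrefl (f x))
    have hxv : (0:ℝ) < ‖x - z₀‖ := by
      rw [norm_pos_iff, sub_ne_zero]; exact fun h => hvx h.symm
    set t := r / (2 * ‖x - z₀‖) with ht_def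
    have ht : 0 < t := by positivity
    set z := x + t • (x - z₀) with hz_def
    have hzmem : z ∈ adjSublevel f x := by
      apply hrball
      rw [mem_ball, dist_eq_norm]
      have : z - x = t • (x - z₀) := by rw [hz_def]; abel
      rw [this, norm_smul, Real.norm_of_nonneg ht.le, ht_def]
      have he : r / (2 * ‖x - z₀‖) * ‖x - z₀‖ = r / 2 := by
        field_simp
      rw [he]; linarith
    have hzd : infDist z S ≤ d := hsub2 hzmem
    have h1t : (0:ℝ) < 1 + t := by linarith
    have key : ∀ θ : ℝ, 0 < θ → d * (1 + t) ≤ d + θ := by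
      intro θ hθ
      obtain ⟨z', hz'S, hz'd⟩ := (infDist_lt_iff hSne).mp
        (lt_of_le_of_lt hzd (by linarith : d < d + θ))
      set m := (1 / (1 + t)) • z' + (t / (1 + t)) • z₀ with hm_def
      have hmS : m ∈ S := hSconv hz'S hz₀ (by positivity) (by positivity)
        (by rw [← add_div, div_self h1t.ne'])
      have hdm : d ≤ dist x m := infDist_le_dist_of_mem hmS
      have hxm : x - m = (1 / (1 + t)) • (z - z') := by
        rw [hm_def, hz_def]
        match_scalars <;> field_simp
      have hdist : dist x m = dist z z' / (1 + t) := by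
        rw [dist_eq_norm, hxm, norm_smul, Real.norm_of_nonneg (by positivity : (0:ℝ) ≤ 1 / (1+t)),
          dist_eq_norm, one_div, inv_mul_eq_div]
      rw [hdist] at hdm
      have := (le_div_iff₀ h1t).mp hdm
      linarith
    have hfinal : d * (1 + t) ≤ d := le_of_forall_pos_le_add (fun θ hθ => key θ hθ)
    nlinarith

lemma exists_unit_normal (hfbot : ∀ y, f y ≠ ⊥)
    (hqc : ∀ l : ℝ, Convex ℝ {y | f y ≤ (l : EReal)})
    {x : X} (hx : ¬ ∀ z, f x ≤ f z)
    {l : ℝ} {v : X} {ε : ℝ} (hε : 0 < ε) (hl : (l : EReal) < f x)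
    (hball : ball v ε ⊆ {y | f y ≤ (l : EReal)}) :
    ∃ p : WeakDual ℝ X, p ∈ adjNormal f x ∧ ‖WeakDual.toStrongDual p‖ = 1 := by
  have hC : Convex ℝ (adjSublevel f x) := convex_adj hfbot hqc x
  have hballC : ball v ε ⊆ adjSublevel f x :=
    fun u hu => strict_subset_adj (lt_of_le_of_lt (hball hu) hl)
  have hvC : v ∈ interior (adjSublevel f x) :=
    mem_interior.mpr ⟨ball v ε, hballC, isOpen_ball, mem_ball_self hε⟩
  have hxnotint : x ∉ interior (adjSublevel f x) :=
    not_mem_interior_adj hfbot hqc hx hε hl hball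
  obtain ⟨p, hp⟩ := geometric_hahn_banach_open_point (hC.interior) isOpen_interior hxnotint
  have hCle : ∀ y ∈ adjSublevel f x, p y ≤ p x := by
    intro y hy
    have seg : ∀ s : ℝ, 0 < s → s < 1 → p ((1 - s) • v + s • y) < p x := by
      intro s hs hs1
      exact hp _ (hC.openSegment_interior_self_subset_interior hvC hy
        ⟨1 - s, s, by linarith, hs, by ring, rfl⟩)
    have cont : Continuous fun s : ℝ => p ((1 - s) • v + s • y) := by
      apply p.continuous.comp
      exact ((continuous_const.sub continuous_id).smul continuous_const).add
        (continuous_id.smul continuous_const)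
    have lim : Tendsto (fun s : ℝ => p ((1 - s) • v + s • y)) (𝓝[<] (1:ℝ)) (𝓝 (p y)) := by
      have h1 := (cont.tendsto 1).mono_left (nhdsWithin_le_nhds (s := Set.Iio (1:ℝ)))
      simpa using h1
    refine le_of_tendsto lim ?_
    have hIoo : Set.Ioo (0:ℝ) 1 ∈ 𝓝[<] (1:ℝ) :=
      Ioo_mem_nhdsLT_of_mem ⟨zero_lt_one, le_refl 1⟩
    filter_upwards [hIoo] with s hs
    exact (seg s hs.1 hs.2).le
  have hpv : p v < p x := hp v hvC
  have hpne : p ≠ 0 := by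
    intro h
    rw [h] at hpv
    simp at hpv
  have hpnorm : (0:ℝ) < ‖p‖ := norm_pos_iff.mpr hpne
  refine ⟨StrongDual.toWeakDual ((‖p‖)⁻¹ • p), ?_, ?_⟩
  · intro y hy
    have h1 : (StrongDual.toWeakDual ((‖p‖)⁻¹ • p)) (y - x) = (‖p‖)⁻¹ * (p y - p x) := by
      have : ((‖p‖)⁻¹ • p) (y - x) = (‖p‖)⁻¹ * p (y - x) := rfl
      rw [show (StrongDual.toWeakDual ((‖p‖)⁻¹ • p)) (y - x) = ((‖p‖)⁻¹ • p) (y - x) from rfl,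
        this, map_sub]
    rw [h1]
    have h2 : p y - p x ≤ 0 := sub_nonpos.mpr (hCle y hy)
    exact mul_nonpos_iff.mpr (Or.inl ⟨inv_nonneg.mpr hpnorm.le, h2⟩)
  · have : WeakDual.toStrongDual (StrongDual.toWeakDual ((‖p‖)⁻¹ • p)) = (‖p‖)⁻¹ • p := rfl
    rw [this, norm_smul, Real.norm_eq_abs, abs_of_pos (inv_pos.mpr hpnorm),
      inv_mul_cancel₀ hpnorm.ne']

lemma approx_adj (hfbot : ∀ y, f y ≠ ⊥) (hqc : ∀ l : ℝ, Convex ℝ {y | f y ≤ (l : EReal)})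
    {x₀ : X} (hx₀ : ¬ ∀ z, f x₀ ≤ f z) {y : X} (hy : y ∈ adjSublevel f x₀)
    {δ : ℝ} (hδ : 0 < δ) :
    ∃ η > 0, ∃ w : X, f w < f x₀ ∧ ∀ x' : X, ¬ (∀ z, f x' ≤ f z) → ‖x' - x₀‖ < η →
      f w < f x' → ∃ y' ∈ adjSublevel f x', ‖y' - y‖ < δ := by
  set S : Set X := {z | f z < f x₀} with hS_def
  obtain ⟨z₀, hz₀⟩ : ∃ z, f z < f x₀ := by push_neg at hx₀; exact hx₀
  have hSne : S.Nonempty := ⟨z₀, hz₀⟩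
  set d₀ := infDist x₀ S with hd₀_def
  rw [adj_eq_of_not_argmin hx₀] at hy
  obtain ⟨hy1, hy2⟩ := hy
  rw [Set.mem_setOf_eq] at hy1 hy2
  set D := infDist y S with hD_def
  obtain ⟨w, hwS, hwdist⟩ := (infDist_lt_iff hSne).mp (show D < D + δ/2 by linarith)
  have hwlt : f w < f x₀ := hwS
  set η := if d₀ ≤ 0 then δ/2 else min (δ/2) d₀ with hη_def
  have hηpos : 0 < η := by
    rw [hη_def]; split_ifs with h
    · linarith
    · exact lt_min (by linarith) (not_le.mp h)
  have hηδ : η ≤ δ/2 := by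
    rw [hη_def]; split_ifs with h
    · exact le_refl _
    · exact min_le_left _ _
  refine ⟨η, hηpos, w, hwlt, ?_⟩
  intro x' hx' hdist hfw
  have hadj' : adjSublevel f x' = {y | f y ≤ f x'} ∩
      {y | infDist y {z | f z < f x'} ≤ infDist x' {z | f z < f x'}} :=
    adj_eq_of_not_argmin hx'
  by_cases h1 : f y < f x'
  · refine ⟨y, strict_subset_adj h1, by simpa using hδ⟩
  push_neg at h1
  have hle : f x' ≤ f x₀ := h1.trans hy1
  by_cases h2 : f x' < f x₀
  · -- x' is in S; use w
    have hd₀x : d₀ ≤ dist x₀ x' := infDist_le_dist_of_mem (show x' ∈ S from h2)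
    have hDd : D ≤ d₀ := hy2
    have hwy : ‖w - y‖ < δ := by
      have e1 : ‖w - y‖ = dist y w := by rw [dist_eq_norm, norm_sub_rev]
      have e2 : dist x₀ x' = ‖x' - x₀‖ := by rw [dist_eq_norm, norm_sub_rev]
      rw [e1]
      calc dist y w < D + δ/2 := hwdist
      _ ≤ d₀ + δ/2 := by linarith
      _ ≤ ‖x' - x₀‖ + δ/2 := by rw [← e2]; linarith
      _ < η + δ/2 := by linarith
      _ ≤ δ := by linarith
    refine ⟨w, strict_subset_adj hfw, hwy⟩
  have hfeq : f x' = f x₀ := le_antisymm hle (not_lt.mp h2)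
  have hSeq : {z | f z < f x'} = S := by rw [hS_def, hfeq]
  rw [hSeq] at hadj'
  set d' := infDist x' S with hd'_def
  by_cases h3 : D ≤ d'
  · refine ⟨y, ?_, by simpa using hδ⟩
    rw [hadj']
    exact ⟨show f y ≤ f x' from hfeq ▸ hy1, show infDist y S ≤ d' from h3⟩
  push_neg at h3
  have hd'0 : 0 ≤ d' := infDist_nonneg
  have hDd : D ≤ d₀ := hy2
  have hd₀pos : 0 < d₀ := lt_of_lt_of_le (lt_of_le_of_lt hd'0 h3) hDd
  have hηd : η ≤ d₀ := by
    rw [hη_def, if_neg (not_le.mpr hd₀pos)]; exact min_le_right _ _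
  set η' := ‖x' - x₀‖ with hη'_def
  have hη'0 : 0 ≤ η' := norm_nonneg _
  have hη'd : η' < d₀ := lt_of_lt_of_le hdist hηd
  set s := (η' + δ/2) / (d₀ + δ/2) with hs_def
  have hden : (0:ℝ) < d₀ + δ/2 := by linarith
  have hs0 : 0 < s := div_pos (by linarith) hden
  have hs1 : s ≤ 1 := (div_le_one hden).mpr (by linarith)
  set y' := y + s • (w - y) with hy'_def
  have hy'eq : y' = (1 - s) • y + s • w := by
    rw [hy'_def]; match_scalars <;> ring
  have hfy' : f y' ≤ f x' := by
    rw [hy'eq, hfeq]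
    exact le_trans (qc_max hfbot hqc (by linarith) hs0.le (by ring)) (max_le hy1 hwlt.le)
  have hywd : dist y w ≤ d₀ + δ/2 := by linarith [hwdist, hDd]
  have hd₀d' : d₀ ≤ d' + η' := by
    have := infDist_le_infDist_add_dist (x := x₀) (y := x') (s := S)
    rw [← hd₀_def, ← hd'_def] at this
    have e2 : dist x₀ x' = η' := by rw [hη'_def, dist_eq_norm, norm_sub_rev]
    linarith [this, e2 ▸ this]
  have hinf : infDist y' S ≤ d' := by
    have hmem : infDist y' S ≤ dist y' w := infDist_le_dist_of_mem hwS
    have he : y' - w = (1 - s) • (y - w) := by rw [hy'_def]; match_scalars <;> ring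
    have e3 : dist y' w = (1 - s) * dist y w := by
      rw [dist_eq_norm, he, norm_smul, Real.norm_of_nonneg (by linarith), dist_eq_norm]
    have e4 : (1 - s) * dist y w ≤ (1 - s) * (d₀ + δ/2) :=
      mul_le_mul_of_nonneg_left hywd (by linarith)
    have e5 : (1 - s) * (d₀ + δ/2) = d₀ - η' := by
      rw [hs_def]; field_simp; ring
    linarith [hmem, e3 ▸ hmem]
  have hnorm : ‖y' - y‖ < δ := by
    have he : y' - y = s • (w - y) := by rw [hy'_def]; abel
    have e6 : ‖y' - y‖ = s * dist y w := by
      rw [he, norm_smul, Real.norm_of_nonneg hs0.le, dist_eq_norm, norm_sub_rev]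
    have e7 : s * dist y w < s * (D + δ/2) := mul_lt_mul_of_pos_left hwdist hs0
    have e8 : s * (D + δ/2) ≤ s * (d₀ + δ/2) :=
      mul_le_mul_of_nonneg_left (by linarith) hs0.le
    have e9 : s * (d₀ + δ/2) = η' + δ/2 := by
      rw [hs_def]; field_simp
    rw [e6]
    calc s * dist y w < s * (D + δ/2) := e7
    _ ≤ s * (d₀ + δ/2) := e8
    _ = η' + δ/2 := e9
    _ < η + δ/2 := by linarith
    _ ≤ δ := by linarith
  refine ⟨y', ?_, hnorm⟩
  rw [hadj']
  exact ⟨hfy', hinf⟩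

end Aux


/-- The candidate base set. -/
noncomputable def baseSet (f : X → EReal) (x : X) : Set (WeakDual ℝ X) :=
  {p | ‖WeakDual.toStrongDual p‖ ≤ 1 ∧ p ∈ adjNormal f x ∧
    ∀ (l : ℝ) (v : X) (ε : ℝ), 0 < ε → (l : EReal) < f x →
      ball v ε ⊆ {y | f y ≤ (l : EReal)} → ε ≤ p (x - v)}

section Main
variable {f : X → EReal}

lemma baseSet_isClosed (x : X) : IsClosed (baseSet f x) := by
  have h1 : IsClosed {p : WeakDual ℝ X | ‖WeakDual.toStrongDual p‖ ≤ 1} := by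
    have he : {p : WeakDual ℝ X | ‖WeakDual.toStrongDual p‖ ≤ 1} =
        WeakDual.toStrongDual ⁻¹' Metric.closedBall (0 : StrongDual ℝ X) 1 := by
      ext p; simp [mem_closedBall_zero_iff]
    rw [he]
    exact WeakDual.isClosed_closedBall 0 1
  have h2 : IsClosed {p : WeakDual ℝ X | p ∈ adjNormal f x} := by
    have he : {p : WeakDual ℝ X | p ∈ adjNormal f x} =
        ⋂ y ∈ adjSublevel f x, {p : WeakDual ℝ X | p (y - x) ≤ 0} := by
      ext p; simp [adjNormal]
    rw [he]
    refine isClosed_biInter (fun y hy => ?_)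
    exact isClosed_le (WeakDual.eval_continuous (y - x)) continuous_const
  have h3 : IsClosed {p : WeakDual ℝ X | ∀ (l : ℝ) (v : X) (ε : ℝ), 0 < ε → (l : EReal) < f x →
      ball v ε ⊆ {y | f y ≤ (l : EReal)} → ε ≤ p (x - v)} := by
    have he : {p : WeakDual ℝ X | ∀ (l : ℝ) (v : X) (ε : ℝ), 0 < ε → (l : EReal) < f x →
        ball v ε ⊆ {y | f y ≤ (l : EReal)} → ε ≤ p (x - v)} =
        ⋂ (l : ℝ) (v : X) (ε : ℝ) (_ : 0 < ε) (_ : (l : EReal) < f x)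
          (_ : ball v ε ⊆ {y | f y ≤ (l : EReal)}), {p : WeakDual ℝ X | ε ≤ p (x - v)} := by
      ext p; simp only [Set.mem_setOf_eq, Set.mem_iInter]
    rw [he]
    refine isClosed_iInter fun l => isClosed_iInter fun v => isClosed_iInter fun ε =>
      isClosed_iInter fun _ => isClosed_iInter fun _ => isClosed_iInter fun _ => ?_
    exact isClosed_le continuous_const (WeakDual.eval_continuous (x - v))
  have he : baseSet f x = _ ∩ (_ ∩ _) := rfl
  exact h1.inter (h2.inter h3)

lemma baseSet_subset_ball (x : X) :
    baseSet f x ⊆ WeakDual.toStrongDual ⁻¹' Metric.closedBall (0 : StrongDual ℝ X) 1 :=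
  fun p hp => by simpa [mem_closedBall_zero_iff] using hp.1

lemma baseSet_isCompact (x : X) : IsCompact (baseSet f x) :=
  (WeakDual.isCompact_closedBall (𝕜 := ℝ) 0 1).of_isClosed_subset (baseSet_isClosed x)
    (baseSet_subset_ball x)

lemma baseSet_convex (x : X) : Convex ℝ (baseSet f x) := by
  intro p hp q hq a b ha hb hab
  obtain ⟨hp1, hp2, hp3⟩ := hp
  obtain ⟨hq1, hq2, hq3⟩ := hq
  have happ : ∀ z : X, (a • p + b • q) z = a * p z + b * q z := fun z => rfl
  refine ⟨?_, ?_, ?_⟩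
  · have he : WeakDual.toStrongDual (a • p + b • q)
        = a • WeakDual.toStrongDual p + b • WeakDual.toStrongDual q := by
      simp [map_add, map_smul]
    rw [he]
    calc ‖a • WeakDual.toStrongDual p + b • WeakDual.toStrongDual q‖
        ≤ ‖a • WeakDual.toStrongDual p‖ + ‖b • WeakDual.toStrongDual q‖ := norm_add_le _ _
    _ = a * ‖WeakDual.toStrongDual p‖ + b * ‖WeakDual.toStrongDual q‖ := by
        rw [norm_smul, norm_smul, Real.norm_of_nonneg ha, Real.norm_of_nonneg hb]
    _ ≤ a * 1 + b * 1 := by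
        gcongr
    _ = 1 := by linarith
  · intro y hy
    rw [happ]
    have h1 := hp2 y hy
    have h2 := hq2 y hy
    nlinarith
  · intro l v ε hε hl hball
    rw [happ]
    have h1 := hp3 l v ε hε hl hball
    have h2 := hq3 l v ε hε hl hball
    nlinarith

lemma baseSet_mem_of_unit {x : X} {p : WeakDual ℝ X} (hp : p ∈ adjNormal f x)
    (hnorm : ‖WeakDual.toStrongDual p‖ = 1) : p ∈ baseSet f x := by
  refine ⟨le_of_eq hnorm, hp, fun l v ε hε hl hball => ?_⟩
  have := norm_le_of_adjNormal hp hε hl hball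
  rw [hnorm, mul_one] at this
  exact this

end Main

/-- Main theorem: if `f : X → ℝ ∪ {+∞}` is proper, quasiconvex and lower
semicontinuous and every `x ∉ argmin f` admits `λ < f(x)` with `int S_λ ≠ ∅`,
then there is a set-valued map `A` on `X \ argmin f`, with values weak*-compact
nonempty convex bases of `N^a(x)` contained in the closed dual unit ball, which is
norm-to-weak* upper semicontinuous at every point of `X \ argmin f`. -/
theorem exists_usc_compact_base_selection
    (f : X → EReal) (hfbot : ∀ y, f y ≠ ⊥) (hproper : ∃ y, f y ≠ ⊤)
    (hqc : ∀ l : ℝ, Convex ℝ {y | f y ≤ (l : EReal)})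
    (hlsc : LowerSemicontinuous f)
    (hint : ∀ x : X, ¬ (∀ y, f x ≤ f y) →
      ∃ l : ℝ, (l : EReal) < f x ∧ (interior {y | f y ≤ (l : EReal)}).Nonempty) :
    ∃ A : X → Set (WeakDual ℝ X),
      (∀ x : X, ¬ (∀ y, f x ≤ f y) →
        A x ⊆ {p : WeakDual ℝ X | ‖WeakDual.toStrongDual p‖ ≤ 1} ∧
        (A x).Nonempty ∧ IsCompact (A x) ∧ Convex ℝ (A x) ∧
        (0 : WeakDual ℝ X) ∉ A x ∧ IsBase (adjNormal f x) (A x)) ∧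
      (∀ x : X, ¬ (∀ y, f x ≤ f y) →
        ∀ Ω : Set (WeakDual ℝ X), IsOpen Ω → A x ⊆ Ω →
          ∀ᶠ x' in 𝓝 x, ¬ (∀ y, f x' ≤ f y) → A x' ⊆ Ω) := by
  refine ⟨fun x => baseSet f x, ?_, ?_⟩
  · -- pointwise properties
    intro x hx
    obtain ⟨l₀, hl₀, v₀, hv₀⟩ := hint x hx
    obtain ⟨ε₀, hε₀, hball₀⟩ := Metric.mem_nhds_iff.mp (mem_interior_iff_mem_nhds.mp hv₀)
    obtain ⟨p₀, hp₀n, hp₀u⟩ := exists_unit_normal hfbot hqc hx hε₀ hl₀ hball₀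
    have hp₀mem : p₀ ∈ baseSet f x := baseSet_mem_of_unit hp₀n hp₀u
    have hzero : (0 : WeakDual ℝ X) ∉ baseSet f x := by
      intro h
      have h1 := h.2.2 l₀ v₀ ε₀ hε₀ hl₀ hball₀
      have h2 : (0 : WeakDual ℝ X) (x - v₀) = 0 := rfl
      rw [h2] at h1
      linarith
    refine ⟨fun p hp => hp.1, ⟨p₀, hp₀mem⟩, baseSet_isCompact x, baseSet_convex x, hzero,
      baseSet_convex x, fun p hp => hp.2.1, ?_, ?_⟩
    · ext p
      constructor
      · intro hpN
        rcases eq_or_ne p 0 with rfl | hne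
        · exact ⟨0, le_refl 0, p₀, hp₀mem, (zero_smul ℝ _).symm⟩
        · have hTne : WeakDual.toStrongDual p ≠ 0 := by
            intro h
            exact hne ((LinearEquiv.map_eq_zero_iff _).mp h)
          set t := ‖WeakDual.toStrongDual p‖ with ht_def
          have ht : 0 < t := norm_pos_iff.mpr hTne
          have haN : t⁻¹ • p ∈ adjNormal f x :=
            smul_mem_adjNormal hpN (inv_nonneg.mpr ht.le)
          have hanorm : ‖WeakDual.toStrongDual (t⁻¹ • p)‖ = 1 := by
            have he : WeakDual.toStrongDual (t⁻¹ • p) = t⁻¹ • WeakDual.toStrongDual p :=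
              map_smul _ _ _
            rw [he, norm_smul, Real.norm_eq_abs, abs_of_pos (inv_pos.mpr ht),
              inv_mul_cancel₀ ht.ne']
          refine ⟨t, ht.le, t⁻¹ • p, baseSet_mem_of_unit haN hanorm, ?_⟩
          rw [smul_smul, mul_inv_cancel₀ ht.ne', one_smul]
      · rintro ⟨t, ht, a, ha, rfl⟩
        exact smul_mem_adjNormal ha.2.1 ht
    · intro h0
      have hcl : IsClosed {p : WeakDual ℝ X | ε₀ ≤ p (x - v₀)} :=
        isClosed_le continuous_const (WeakDual.eval_continuous _)
      have hsub : baseSet f x ⊆ {p : WeakDual ℝ X | ε₀ ≤ p (x - v₀)} :=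
        fun p hp => hp.2.2 l₀ v₀ ε₀ hε₀ hl₀ hball₀
      have h1 : ε₀ ≤ (0 : WeakDual ℝ X) (x - v₀) := closure_minimal hsub hcl h0
      have h2 : (0 : WeakDual ℝ X) (x - v₀) = 0 := rfl
      rw [h2] at h1
      linarith
  · -- upper semicontinuity
    intro x hx Ω hΩ hAΩ
    by_contra hnot
    rw [Filter.not_eventually] at hnot
    set S : Set X := {x' | ¬ (∀ z, f x' ≤ f z) ∧ ∃ p ∈ baseSet f x', p ∉ Ω} with hS_def
    have hfreq : ∃ᶠ x' in 𝓝 x, x' ∈ S := by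
      refine hnot.mono (fun x' h => ?_)
      rw [Classical.not_imp] at h
      obtain ⟨h1, h2⟩ := h
      obtain ⟨p, hp1, hp2⟩ := Set.not_subset.mp h2
      exact ⟨h1, p, hp1, hp2⟩
    have hNB : (𝓝 x ⊓ 𝓟 S).NeBot := frequently_mem_iff_neBot.mp hfreq
    set g : X → WeakDual ℝ X := fun x' =>
      if h : ∃ p, p ∈ baseSet f x' ∧ p ∉ Ω then h.choose else 0 with hg_def
    have hg : ∀ x' ∈ S, g x' ∈ baseSet f x' ∧ g x' ∉ Ω := by
      intro x' hx'
      have hex : ∃ p, p ∈ baseSet f x' ∧ p ∉ Ω := by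
        obtain ⟨_, p, hp1, hp2⟩ := hx'
        exact ⟨p, hp1, hp2⟩
      rw [hg_def]
      simp only [dif_pos hex]
      exact hex.choose_spec
    set K : Set (WeakDual ℝ X) :=
      (WeakDual.toStrongDual ⁻¹' Metric.closedBall (0 : StrongDual ℝ X) 1) ∩ Ωᶜ with hK_def
    have hKcomp : IsCompact K :=
      (WeakDual.isCompact_closedBall (𝕜 := ℝ) 0 1).inter_right hΩ.isClosed_compl
    haveI := hNB
    have hle : Filter.map g (𝓝 x ⊓ 𝓟 S) ≤ 𝓟 K := by
      rw [Filter.le_principal_iff, Filter.mem_map]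
      have hev : ∀ᶠ x' in 𝓝 x ⊓ 𝓟 S, x' ∈ S :=
        Filter.eventually_inf_principal.mpr (Filter.Eventually.of_forall (fun _ h => h))
      refine Filter.mem_of_superset hev (fun x' hx' => ?_)
      obtain ⟨hg1, hg2⟩ := hg x' hx'
      exact ⟨by simpa [mem_closedBall_zero_iff] using hg1.1, hg2⟩
    obtain ⟨p, hpK, hpcl⟩ := hKcomp.exists_clusterPt hle
    have hfr : ∀ U ∈ 𝓝 p, ∃ᶠ x' in 𝓝 x ⊓ 𝓟 S, g x' ∈ U := by
      have hmp : MapClusterPt p (𝓝 x ⊓ 𝓟 S) g := hpcl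
      exact fun U hU => (mapClusterPt_iff_frequently.mp hmp) U hU
    have hevS : ∀ᶠ x' in 𝓝 x ⊓ 𝓟 S, x' ∈ S :=
      Filter.eventually_inf_principal.mpr (Filter.Eventually.of_forall (fun _ h => h))
    -- p is in baseSet f x
    have hpnorm : ‖WeakDual.toStrongDual p‖ ≤ 1 := by
      have := hpK.1
      simpa [mem_closedBall_zero_iff] using this
    have hthird : ∀ (l : ℝ) (v : X) (ε : ℝ), 0 < ε → (l : EReal) < f x →
        ball v ε ⊆ {y | f y ≤ (l : EReal)} → ε ≤ p (x - v) := by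
      intro l v ε hε hl hball
      by_contra hcon
      push_neg at hcon
      set γ := ε - p (x - v) with hγ_def
      have hγ : 0 < γ := by rw [hγ_def]; linarith
      have hUopen : IsOpen {q : WeakDual ℝ X | q (x - v) < ε - γ/2} :=
        isOpen_lt (WeakDual.eval_continuous (x - v)) continuous_const
      have hUmem : p ∈ {q : WeakDual ℝ X | q (x - v) < ε - γ/2} := by
        show p (x - v) < ε - γ/2
        rw [hγ_def]; linarith
      have hev2 : ∀ᶠ x' in 𝓝 x ⊓ 𝓟 S, ((l : EReal) < f x' ∧ dist x' x < γ/2) := by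
        apply Filter.Eventually.filter_mono inf_le_left
        have e1 : ∀ᶠ x' in 𝓝 x, (l : EReal) < f x' := hlsc x (l : EReal) hl
        have e2 : ∀ᶠ x' in 𝓝 x, dist x' x < γ/2 := by
          filter_upwards [Metric.ball_mem_nhds x (by linarith : (0:ℝ) < γ/2)] with x' hx'
          exact mem_ball.mp hx'
        exact e1.and e2
      obtain ⟨x', hgU, ⟨hx'l, hx'd⟩, hx'S⟩ :=
        ((hfr _ (hUopen.mem_nhds hUmem)).and_eventually (hev2.and hevS)).exists
      obtain ⟨hgA, hgΩ⟩ := hg x' hx'S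
      have h1 : ε ≤ g x' (x' - v) := hgA.2.2 l v ε hε hx'l hball
      have h2 : g x' (x - v) = g x' (x' - v) + g x' (x - x') := by
        rw [map_sub, map_sub, map_sub]; ring
      have h3 : ‖g x' (x - x')‖ ≤ ‖WeakDual.toStrongDual (g x')‖ * ‖x - x'‖ :=
        (WeakDual.toStrongDual (g x')).le_opNorm (x - x')
      have h4 : ‖x - x'‖ < γ/2 := by
        rw [norm_sub_rev, ← dist_eq_norm]
        exact hx'd
      have h5 : ‖WeakDual.toStrongDual (g x')‖ ≤ 1 := hgA.1
      have h6 : |g x' (x - x')| < γ/2 := by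
        rw [← Real.norm_eq_abs]
        calc ‖g x' (x - x')‖ ≤ ‖WeakDual.toStrongDual (g x')‖ * ‖x - x'‖ := h3
        _ ≤ 1 * ‖x - x'‖ := by
            apply mul_le_mul_of_nonneg_right h5 (norm_nonneg _)
        _ = ‖x - x'‖ := one_mul _
        _ < γ/2 := h4
      have h7 : g x' (x - v) < ε - γ/2 := hgU
      have h8 := abs_lt.mp h6
      linarith [h1, h2 ▸ h7]
    have hnormal : p ∈ adjNormal f x := by
      intro y hy
      by_contra hcon
      push_neg at hcon
      set c := p (y - x) with hc_def
      have hc : 0 < c := hcon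
      obtain ⟨η, hη, w, hwlt, happrox⟩ := approx_adj hfbot hqc hx hy
        (show (0:ℝ) < c/4 by linarith)
      have hUopen : IsOpen {q : WeakDual ℝ X | c/2 < q (y - x)} :=
        isOpen_lt continuous_const (WeakDual.eval_continuous (y - x))
      have hUmem : p ∈ {q : WeakDual ℝ X | c/2 < q (y - x)} := by
        show c/2 < p (y - x)
        rw [← hc_def]; linarith
      have hev2 : ∀ᶠ x' in 𝓝 x ⊓ 𝓟 S, (f w < f x' ∧ dist x' x < min η (c/4)) := by
        apply Filter.Eventually.filter_mono inf_le_left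
        have e1 : ∀ᶠ x' in 𝓝 x, f w < f x' := hlsc x (f w) hwlt
        have e2 : ∀ᶠ x' in 𝓝 x, dist x' x < min η (c/4) := by
          filter_upwards [Metric.ball_mem_nhds x (lt_min hη (show (0:ℝ) < c/4 by linarith))] with x' hx'
          exact mem_ball.mp hx'
        exact e1.and e2
      obtain ⟨x', hgU, ⟨hx'w, hx'd⟩, hx'S⟩ :=
        ((hfr _ (hUopen.mem_nhds hUmem)).and_eventually (hev2.and hevS)).exists
      obtain ⟨hgA, hgΩ⟩ := hg x' hx'S
      have hx'norm : ‖x' - x‖ < η := by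
        rw [← dist_eq_norm]
        exact lt_of_lt_of_le hx'd (min_le_left _ _)
      obtain ⟨y', hy'adj, hy'near⟩ := happrox x' hx'S.1 hx'norm hx'w
      have h0 : g x' (y' - x') ≤ 0 := hgA.2.1 y' hy'adj
      have h2 : g x' (y - x) = g x' (y - y') + g x' (y' - x') + g x' (x' - x) := by
        rw [map_sub, map_sub, map_sub, map_sub]; ring
      have h5 : ‖WeakDual.toStrongDual (g x')‖ ≤ 1 := hgA.1
      have hb1 : |g x' (y - y')| ≤ ‖y - y'‖ := by
        rw [← Real.norm_eq_abs]
        calc ‖g x' (y - y')‖ ≤ ‖WeakDual.toStrongDual (g x')‖ * ‖y - y'‖ :=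
              (WeakDual.toStrongDual (g x')).le_opNorm _
        _ ≤ 1 * ‖y - y'‖ := mul_le_mul_of_nonneg_right h5 (norm_nonneg _)
        _ = ‖y - y'‖ := one_mul _
      have hb2 : |g x' (x' - x)| ≤ ‖x' - x‖ := by
        rw [← Real.norm_eq_abs]
        calc ‖g x' (x' - x)‖ ≤ ‖WeakDual.toStrongDual (g x')‖ * ‖x' - x‖ :=
              (WeakDual.toStrongDual (g x')).le_opNorm _
        _ ≤ 1 * ‖x' - x‖ := mul_le_mul_of_nonneg_right h5 (norm_nonneg _)
        _ = ‖x' - x‖ := one_mul _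
      have hyy' : ‖y - y'‖ < c/4 := by rw [norm_sub_rev]; exact hy'near
      have hx'x : ‖x' - x‖ < c/4 := by
        rw [← dist_eq_norm]
        exact lt_of_lt_of_le hx'd (min_le_right _ _)
      have h7 : c/2 < g x' (y - x) := hgU
      have hab1 := abs_le.mp hb1
      have hab2 := abs_le.mp hb2
      linarith [h2 ▸ h7]
    have hpA : p ∈ baseSet f x := ⟨hpnorm, hnormal, hthird⟩
    exact hpK.2 (hAΩ hpA)
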